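/- arXiv:2506.20581 — 2 statements merged into one kernel-verified Lean document; each statement's English description precedes it below -/
import Mathlib

section
/- Let i and K be non-negative integers with i ≤ K/r. Then Σ_{f ∈ M_K} |c_i(f)|² ≪ q^{K+(1−r)i}, where the implicit constant depends at most on q and r. -/
open MeasureTheory Polynomial

noncomputable section

namespace RFreePaper

variable (p h : ℕ) (Fq : Type) [Field Fq] [Fintype Fq] [DecidableEq Fq]

/-- The field `F_q((1/t))` of formal Laurent series in `1/t`, realized as the field of
formal Laurent series in the variable `u = 1/t`; the coefficient of `t^{-n}` is the
coefficient of `u^n`. -/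
abbrev K : Type := LaurentSeries Fq

/-- The element `t` of `K`, namely `u⁻¹`. -/
def tK : K Fq := HahnSeries.single (-1 : ℤ) 1

/-- The natural embedding of the polynomial ring `F_q[t]` into `K = F_q((1/t))`. -/
def toK : Polynomial Fq →+* K Fq := (Polynomial.aeval (tK Fq)).toRingHom

/-- `ord α`: the degree of a Laurent series in `t` (for `α ≠ 0`). -/
def Kord (α : K Fq) : ℤ := -HahnSeries.order α

/-- The normalized absolute value `|α| = q^(ord α)`, with `|0| = 0`. -/
def Kabs (α : K Fq) : ℝ :=
  letI := Classical.propDecidable (α = (0 : K Fq))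
  if α = 0 then 0 else (Fintype.card Fq : ℝ) ^ (Kord Fq α)

/-- The torus `𝕋 = {α : |α| < 1}`. -/
def torus : Set (K Fq) := {α | Kabs Fq α < 1}

/-- The parametrization of the torus `𝕋` by sequences of coefficients:
`x : ℕ → Fq` corresponds to `Σ_{n ≥ 0} x n · t^{-(n+1)}`.  The normalized Haar
measure on `𝕋` corresponds to the Haar (uniform product) probability measure on
`ℕ → Fq` under this bijection. -/
def phi (x : ℕ → Fq) : K Fq :=
  HahnSeries.ofPowerSeries ℤ Fq (PowerSeries.mk x) * HahnSeries.single (1 : ℤ) (1 : Fq)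

/-- The trace map `F_q → F_p`. -/
def trFq [CharP Fq p] (c : Fq) : ZMod p :=
  haveI : Nonempty (ZMod p) := ⟨0⟩
  Function.invFun (ZMod.castHom (dvd_refl p) Fq) (∑ i ∈ Finset.range h, c ^ p ^ i)

/-- The additive character `e_q(c) = exp(2πi·tr(c)/p)` on `F_q`. -/
def eFq [CharP Fq p] (c : Fq) : ℂ :=
  Complex.exp (2 * (Real.pi : ℂ) * Complex.I * ((trFq p h Fq c).val : ℂ) / (p : ℂ))

/-- The additive character `e(α) = e_q(α_{-1})` on `F_q((1/t))`. -/
def eK [CharP Fq p] (α : K Fq) : ℂ := eFq p h Fq (α.coeff 1)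

/-- A polynomial is `r`-free if it is divisible by no `r`-th power of an irreducible. -/
def IsRFree (r : ℕ) (f : Polynomial Fq) : Prop :=
  ∀ π : Polynomial Fq, Irreducible π → ¬ π ^ r ∣ f

/-- `a_r`, the indicator function of the `r`-free polynomials. -/
def ar (r : ℕ) (f : Polynomial Fq) : ℂ :=
  letI := Classical.propDecidable (IsRFree Fq r f)
  if IsRFree Fq r f then 1 else 0

/-- The Möbius function on `F_q[t]`. -/
def muF (f : Polynomial Fq) : ℤ :=
  letI := Classical.propDecidable (Squarefree f)
  if Squarefree f then
    (-1) ^ Multiset.card (UniqueFactorizationMonoid.normalizedFactors f) else 0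

/-- The absolute value `|f| = q^(deg f)` on `F_q[t]`, with `|0| = 0`. -/
def pAbs (f : Polynomial Fq) : ℝ :=
  letI := Classical.propDecidable (f = (0 : Polynomial Fq))
  if f = 0 then 0 else (Fintype.card Fq : ℝ) ^ f.natDegree

/-- `c_i(f) = Σ_{d ∈ M_i, d^r ∣ f} μ(d)`. -/
def cI (r i : ℕ) (f : Polynomial Fq) : ℤ :=
  ∑ᶠ d ∈ {d : Polynomial Fq | d.Monic ∧ d.natDegree = i ∧ d ^ r ∣ f}, muF Fq d

/-- Monic polynomials of degree at most `N` (i.e. monic `f` with `|f| ≤ q^N`). -/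
def monicLE (N : ℕ) : Set (Polynomial Fq) := {f | f.Monic ∧ f.natDegree ≤ N}

/-- Monic polynomials of degree exactly `n`. -/
def monicEQ (n : ℕ) : Set (Polynomial Fq) := {f | f.Monic ∧ f.natDegree = n}

/-- All polynomials `f` with `|f| < q^m`. -/
def degLT (m : ℕ) : Set (Polynomial Fq) := {f | f.degree < (m : WithBot ℕ)}

variable [CharP Fq p]

/-- `G(α) = Σ_{f ∈ M, |f| ≤ q^N} a_r(f) e(fα)`. -/
def G (r N : ℕ) (α : K Fq) : ℂ :=
  ∑ᶠ f ∈ monicLE Fq N, ar Fq r f * eK p h Fq (toK Fq f * α)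

/-- `g₁(α) = Σ_{|f| < q^N} a_r(f) e(fα)`, over all (not necessarily monic) `f`. -/
def g1 (r N : ℕ) (α : K Fq) : ℂ :=
  ∑ᶠ f ∈ degLT Fq N, ar Fq r f * eK p h Fq (toK Fq f * α)

/-- `g₂(α) = Σ_{|f| < q^N} (1 - |f|/q^N) a_r(f) e(fα)`. -/
def g2 (r N : ℕ) (α : K Fq) : ℂ :=
  ∑ᶠ f ∈ degLT Fq N,
    ((1 - pAbs Fq f / (Fintype.card Fq : ℝ) ^ N : ℝ) : ℂ) *
      (ar Fq r f * eK p h Fq (toK Fq f * α))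

/-- `T_i(α) = Σ_{f ∈ M_N} c_i(f) e(fα)`. -/
def TT (r N i : ℕ) (α : K Fq) : ℂ :=
  ∑ᶠ f ∈ monicEQ Fq N, (cI Fq r i f : ℂ) * eK p h Fq (toK Fq f * α)

/-- `T_*(α) = Σ_{D < i ≤ ⌊N/r⌋} T_i(α)` with `D = ⌊N/(r+1)⌋`. -/
def Tstar (r N : ℕ) (α : K Fq) : ℂ :=
  ∑ i ∈ Finset.Ioc (N / (r + 1)) (N / r), TT p h Fq r N i α

/-- `v(β) = Σ_{g ∈ M, |g| ≤ q^N} e(gβ)`. -/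
def vN (N : ℕ) (α : K Fq) : ℂ := ∑ᶠ g ∈ monicLE Fq N, eK p h Fq (toK Fq g * α)

/-- The Fejér kernel `F(α) = Σ_{|f| < q^N} (1 - |f|/q^N) e(fα)`. -/
def Fej (N : ℕ) (α : K Fq) : ℂ :=
  ∑ᶠ f ∈ degLT Fq N,
    ((1 - pAbs Fq f / (Fintype.card Fq : ℝ) ^ N : ℝ) : ℂ) * eK p h Fq (toK Fq f * α)

/-- `H_d(α) = |d|^{-r} Σ_{|a| < |d|^r, (a, d^r) r-free} F(α - a/d^r)`. -/
def Hd (r N : ℕ) (d : Polynomial Fq) (α : K Fq) : ℂ :=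
  ((((Fintype.card Fq : ℝ) ^ (r * d.natDegree))⁻¹ : ℝ) : ℂ) *
    ∑ᶠ a ∈ {a : Polynomial Fq | a.degree < ((r * d.natDegree : ℕ) : WithBot ℕ) ∧
        IsRFree Fq r (EuclideanDomain.gcd a (d ^ r))},
      Fej p h Fq N (α - toK Fq a / toK Fq d ^ r)

/-- `S(f^r, ℓ) = Σ_{d ∈ M} (μ(d)/|d|^r) Σ_{|u| < |f|^r} e(u d^r ℓ / f^r)`. -/
def Ssum (r : ℕ) (f ℓ : Polynomial Fq) : ℂ :=
  ∑' d : {d : Polynomial Fq // d.Monic},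
    ((muF Fq d.1 : ℂ) / (((Fintype.card Fq : ℝ) ^ (r * d.1.natDegree) : ℝ) : ℂ)) *
      ∑ᶠ u ∈ degLT Fq (r * f.natDegree),
        eK p h Fq (toK Fq u * toK Fq d.1 ^ r * toK Fq ℓ / toK Fq f ^ r)

/-- `Φ_r(f) = |f|^r Π_{π ∣ f monic irreducible} (1 - |π|^{-r})`. -/
def PhiR (r : ℕ) (f : Polynomial Fq) : ℝ :=
  (Fintype.card Fq : ℝ) ^ (r * f.natDegree) *
    ∏ᶠ π ∈ {π : Polynomial Fq | π.Monic ∧ Irreducible π ∧ π ∣ f},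
      (1 - (((Fintype.card Fq : ℝ) ^ (r * π.natDegree))⁻¹))

/-- `ζ_q(r) = (1 - q^{1-r})⁻¹`. -/
def zetaq (r : ℕ) : ℝ := (1 - (Fintype.card Fq : ℝ) ^ ((1 : ℤ) - (r : ℤ)))⁻¹

/-- The completed singular series `𝔖_r(k) = Σ_{f ∈ M} μ²(f) Φ_r(f)^{1-k}`. -/
def singS (r : ℕ) (k : ℝ) : ℝ :=
  ∑' f : {f : Polynomial Fq // f.Monic}, (muF Fq f.1 : ℝ) ^ 2 * PhiR Fq r f.1 ^ (1 - k)

/-- The truncated singular series `𝔖_r(k;Q) = Σ_{f ∈ M, |f| ≤ q^{Q/r}} μ²(f) Φ_r(f)^{1-k}`. -/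
def singSQ (r : ℕ) (k : ℝ) (Q : ℕ) : ℝ :=
  ∑ᶠ f ∈ {f : Polynomial Fq | f.Monic ∧ r * f.natDegree ≤ Q},
    (muF Fq f : ℝ) ^ 2 * PhiR Fq r f ^ (1 - k)

/-- The archimedean constant `B(k)`. -/
def Bconst (k : ℝ) : ℝ :=
  ((Fintype.card Fq : ℝ) ^ (k - 1) / ((Fintype.card Fq : ℝ) ^ (k - 1) - 1)) *
    ((Fintype.card Fq : ℝ)⁻¹ *
        (∑ a : Fq, ‖eFq p h Fq a + ((((Fintype.card Fq : ℝ) - 1)⁻¹ : ℝ) : ℂ)‖ ^ k) -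
      (((Fintype.card Fq : ℝ) - 1)⁻¹) ^ k)

/-- `b_d = Σ_{m ∈ M, |m| ≤ q^D/|d|, (m,d) = 1} μ(m)/|m|^r` with `D = ⌊N/(r+1)⌋`. -/
def bd (r N : ℕ) (d : Polynomial Fq) : ℝ :=
  ∑ᶠ m ∈ {m : Polynomial Fq | m.Monic ∧ m.natDegree ≤ N / (r + 1) - d.natDegree ∧
      IsCoprime m d},
    (muF Fq m : ℝ) / (Fintype.card Fq : ℝ) ^ (r * m.natDegree)

/-- The major arc `𝔐_N(f^r, ℓ) = {α ∈ 𝕋 : |f^r α - ℓ| < q^{Q-N}}`. -/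
def arc (r N Q : ℕ) (f ℓ : Polynomial Fq) : Set (K Fq) :=
  {α | Kabs Fq α < 1 ∧
    Kabs Fq (toK Fq f ^ r * α - toK Fq ℓ) < (Fintype.card Fq : ℝ) ^ ((Q : ℤ) - (N : ℤ))}

/-- The admissibility condition on the pair `(f, ℓ)` defining a major arc:
`f` monic squarefree, `0 ≤ |ℓ| < |f|^r ≤ q^Q` and `(ℓ, f^r)` is `r`-free. -/
def arcCond (r Q : ℕ) (f ℓ : Polynomial Fq) : Prop :=
  f.Monic ∧ Squarefree f ∧ r * f.natDegree ≤ Q ∧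
    ℓ.degree < ((r * f.natDegree : ℕ) : WithBot ℕ) ∧
    IsRFree Fq r (EuclideanDomain.gcd ℓ (f ^ r))

/-- The major arcs `𝔐_N(Q)`. -/
def majorArcs (r N Q : ℕ) : Set (K Fq) :=
  ⋃ fl ∈ {fl : Polynomial Fq × Polynomial Fq | arcCond Fq r Q fl.1 fl.2},
    arc Fq r N Q fl.1 fl.2

/-- The minor arcs `𝔪_N(Q) = 𝕋 \ 𝔐_N(Q)`. -/
def minorArcs (r N Q : ℕ) : Set (K Fq) := torus Fq \ majorArcs Fq r N Q


/-! ### Auxiliary lemmas for `statement2` -/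

private lemma natDegree_eq_of_associated' {pp qq : Polynomial Fq} (hp : pp ≠ 0)
    (h : Associated pp qq) : pp.natDegree = qq.natDegree := by
  obtain ⟨u, rfl⟩ := h
  simp [Polynomial.natDegree_mul hp (Units.ne_zero u),
    Polynomial.natDegree_eq_zero_of_isUnit u.isUnit]

private lemma finite_degLT' (n : ℕ) :
    {f : Polynomial Fq | f.degree < (n : WithBot ℕ)}.Finite := by
  haveI h1 : Finite (Polynomial.degreeLT Fq n) :=
    Finite.of_equiv _ (Polynomial.degreeLTEquiv Fq n).toEquiv.symm
  have h2 : {f : Polynomial Fq | f.degree < (n : WithBot ℕ)} = ↑(Polynomial.degreeLT Fq n) := by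
    ext f; simp [Polynomial.mem_degreeLT]
  rw [h2]
  exact Set.toFinite _

private lemma finite_monicEQ (n : ℕ) : (monicEQ Fq n).Finite := by
  apply (finite_degLT' Fq (n + 1)).subset
  rintro f ⟨hm, hd⟩
  simp only [Set.mem_setOf_eq]
  rw [Polynomial.degree_eq_natDegree hm.ne_zero, hd]
  exact_mod_cast Nat.lt_succ_self n

/-- The finset of monic polynomials of degree `n`. -/
private def MM (n : ℕ) : Finset (Polynomial Fq) := (finite_monicEQ Fq n).toFinset

private lemma mem_MM {n : ℕ} {f : Polynomial Fq} :
    f ∈ MM Fq n ↔ f.Monic ∧ f.natDegree = n := by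
  simp [MM, Set.Finite.mem_toFinset, monicEQ]

private lemma card_MM (n : ℕ) : (MM Fq n).card ≤ Fintype.card Fq ^ n := by
  have h : (MM Fq n).card ≤ (Finset.univ : Finset (Fin n → Fq)).card := by
    apply Finset.card_le_card_of_injOn (fun f (j : Fin n) => f.coeff j) (fun _ _ => Finset.mem_univ _)
    intro f hf g hg hfg
    simp only [Finset.mem_coe, mem_MM] at hf hg
    ext m
    rcases lt_trichotomy m n with hm | hm | hm
    · exact congrFun hfg ⟨m, hm⟩
    · have e1 : f.coeff m = 1 := by rw [hm, ← hf.2]; exact hf.1.coeff_natDegree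
      have e2 : g.coeff m = 1 := by rw [hm, ← hg.2]; exact hg.1.coeff_natDegree
      rw [e1, e2]
    · rw [Polynomial.coeff_eq_zero_of_natDegree_lt (hf.2 ▸ hm),
        Polynomial.coeff_eq_zero_of_natDegree_lt (hg.2 ▸ hm)]
  simpa using h

open scoped Classical in
private lemma card_dvd_le (g : Polynomial Fq) (hg : g.Monic) (n : ℕ) :
    ((MM Fq n).filter (fun f => g ∣ f)).card ≤ Fintype.card Fq ^ (n - g.natDegree) := by
  have key : ∀ f ∈ (MM Fq n).filter (fun f => g ∣ f), g * (f /ₘ g) = f := by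
    intro f hf
    rw [Finset.mem_filter] at hf
    conv_rhs => rw [← Polynomial.modByMonic_add_div f g]
    rw [(Polynomial.modByMonic_eq_zero_iff_dvd hg).mpr hf.2, zero_add]
  calc ((MM Fq n).filter (fun f => g ∣ f)).card ≤ (MM Fq (n - g.natDegree)).card := by
        apply Finset.card_le_card_of_injOn (fun f => f /ₘ g)
        · intro f hf
          have hkey := key f hf
          rw [Finset.mem_coe, Finset.mem_filter, mem_MM] at hf
          have hm : (f /ₘ g).Monic := hg.of_mul_monic_left (by rw [hkey]; exact hf.1.1)
          simp only [Finset.mem_coe, mem_MM]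
          refine ⟨hm, ?_⟩
          have hdeg : g.natDegree + (f /ₘ g).natDegree = n := by
            rw [← hg.natDegree_mul hm, hkey, hf.1.2]
          omega
        · intro f1 h1 f2 h2 h12
          simp only [Finset.mem_coe] at h1 h2
          rw [← key f1 h1, ← key f2 h2, show f1 /ₘ g = f2 /ₘ g from h12]
    _ ≤ _ := card_MM Fq _

open scoped Classical in
private lemma card_dvd_le' (g : Polynomial Fq) (hg : g ≠ 0) (n : ℕ) :
    ((MM Fq n).filter (fun f => g ∣ f)).card ≤ Fintype.card Fq ^ (n - g.natDegree) := by
  set g' := g * Polynomial.C (g.leadingCoeff)⁻¹ with hg'def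
  have hmon : g'.Monic := Polynomial.monic_mul_leadingCoeff_inv hg
  have hdvd1 : g ∣ g' := Dvd.intro _ rfl
  have hdvd2 : g' ∣ g := by
    refine ⟨Polynomial.C g.leadingCoeff, ?_⟩
    rw [hg'def, mul_assoc, ← Polynomial.C_mul,
      inv_mul_cancel₀ (Polynomial.leadingCoeff_ne_zero.mpr hg), Polynomial.C_1, mul_one]
  have hassoc : Associated g g' := associated_of_dvd_dvd hdvd1 hdvd2
  have hdeg : g'.natDegree = g.natDegree := (natDegree_eq_of_associated' Fq hg hassoc).symm
  have hfil : (MM Fq n).filter (fun f => g ∣ f) = (MM Fq n).filter (fun f => g' ∣ f) := by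
    apply Finset.filter_congr
    intro f _
    exact ⟨fun hh => hdvd2.trans hh, fun hh => hdvd1.trans hh⟩
  rw [hfil, ← hdeg]
  exact card_dvd_le Fq g' hmon n

open scoped Classical in
private lemma card_dvd_le_real (g : Polynomial Fq) (hg : g ≠ 0) (n : ℕ) :
    (((MM Fq n).filter (fun f => g ∣ f)).card : ℝ)
      ≤ (Fintype.card Fq : ℝ) ^ ((n : ℤ) - g.natDegree) := by
  by_cases hle : g.natDegree ≤ n
  · calc (((MM Fq n).filter (fun f => g ∣ f)).card : ℝ)
        ≤ ((Fintype.card Fq ^ (n - g.natDegree) : ℕ) : ℝ) := by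
          exact_mod_cast card_dvd_le' Fq g hg n
      _ = (Fintype.card Fq : ℝ) ^ ((n : ℤ) - g.natDegree) := by
          rw [Nat.cast_pow, ← zpow_natCast]
          congr 1
          omega
  · have hempty : (MM Fq n).filter (fun f => g ∣ f) = ∅ := by
      rw [Finset.filter_eq_empty_iff]
      intro f hf hdvd
      rw [mem_MM] at hf
      exact hle (hf.2 ▸ Polynomial.natDegree_le_of_dvd hdvd hf.1.ne_zero)
    rw [hempty]
    simp only [Finset.card_empty, Nat.cast_zero]
    exact zpow_nonneg (Nat.cast_nonneg _) _

private lemma natDegree_gcd_pow_le (r : ℕ) (d1 d2 : Polynomial Fq)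
    (h1 : d1 ≠ 0) (h2 : d2 ≠ 0) :
    (gcd (d1 ^ r) (d2 ^ r)).natDegree ≤ r * (gcd d1 d2).natDegree := by
  obtain ⟨a, ha⟩ := gcd_dvd_left d1 d2
  obtain ⟨b, hb⟩ := gcd_dvd_right d1 d2
  set g := gcd d1 d2 with hgdef
  have hgne : g ≠ 0 := fun hh => h1 (by rw [ha, hh, zero_mul])
  have hane : a ≠ 0 := fun hh => h1 (by rw [ha, hh, mul_zero])
  have hcop : IsUnit (gcd (a ^ r) (b ^ r)) := by
    by_contra hnu
    have hne : gcd (a ^ r) (b ^ r) ≠ 0 := fun hh =>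
      (pow_ne_zero r hane) ((gcd_eq_zero_iff _ _).mp hh).1
    obtain ⟨π, hπ, hπd⟩ := WfDvdMonoid.exists_irreducible_factor hnu hne
    have hπa : π ∣ a := hπ.prime.dvd_of_dvd_pow (hπd.trans (gcd_dvd_left _ _))
    have hπb : π ∣ b := hπ.prime.dvd_of_dvd_pow (hπd.trans (gcd_dvd_right _ _))
    obtain ⟨a', rfl⟩ := hπa
    obtain ⟨b', rfl⟩ := hπb
    have hgg : g * π ∣ g := by
      apply dvd_gcd
      · exact ⟨a', by rw [ha, mul_assoc]⟩
      · exact ⟨b', by rw [hb, mul_assoc]⟩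
    obtain ⟨c, hc⟩ := hgg
    have hone : π * c = 1 := mul_left_cancel₀ hgne (by rw [← mul_assoc, ← hc, mul_one])
    exact hπ.not_isUnit (IsUnit.of_mul_eq_one _ hone)
  have hassoc : Associated (gcd (d1 ^ r) (d2 ^ r)) (g ^ r * gcd (a ^ r) (b ^ r)) := by
    rw [ha, hb, mul_pow, mul_pow]
    exact gcd_mul_left' (g ^ r) (a ^ r) (b ^ r)
  have hne0 : gcd (d1 ^ r) (d2 ^ r) ≠ 0 := fun hh =>
    (pow_ne_zero r h1) ((gcd_eq_zero_iff _ _).mp hh).1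
  rw [natDegree_eq_of_associated' Fq hne0 hassoc,
    Polynomial.natDegree_mul (pow_ne_zero _ hgne) hcop.ne_zero,
    Polynomial.natDegree_eq_zero_of_isUnit hcop, Polynomial.natDegree_pow, add_zero]

private lemma keyProd (s : Finset (Polynomial Fq)) (A : Polynomial Fq → Prop)
    [DecidablePred A] (V : ℝ) :
    ∑ p ∈ s ×ˢ s, (if A p.1 ∧ A p.2 then V else 0) = ((s.filter A).card : ℝ) ^ 2 * V := by
  rw [Finset.sum_product]
  have h1 : ∀ x : Polynomial Fq, ∑ b ∈ s, (if A x ∧ A b then V else 0)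
      = (if A x then (1 : ℝ) else 0) * ∑ b ∈ s, (if A b then V else 0) := by
    intro x
    rw [Finset.mul_sum]
    refine Finset.sum_congr rfl fun b _ => ?_
    by_cases hx : A x <;> by_cases hb : A b <;> simp [hx, hb]
  simp_rw [h1]
  rw [← Finset.sum_mul, Finset.sum_boole, ← Finset.sum_filter, Finset.sum_const, nsmul_eq_mul]
  ring

private lemma muF_abs_le (d : Polynomial Fq) : |muF Fq d| ≤ 1 := by
  rw [muF]
  split_ifs
  · rw [abs_pow, abs_neg, abs_one, one_pow]
  · simp

theorem statement2
    [Fact p.Prime] (hcard : Fintype.card Fq = p ^ h) (r : ℕ) (hr : 2 ≤ r) :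
    ∃ C : ℝ, 0 < C ∧ ∀ i KK : ℕ, r * i ≤ KK →
      (∑ᶠ f ∈ monicEQ Fq KK, ((cI Fq r i f : ℝ)) ^ 2) ≤
        C * (Fintype.card Fq : ℝ) ^ ((KK : ℤ) + (1 - (r : ℤ)) * (i : ℤ)) := by
  classical
  refine ⟨2, by norm_num, ?_⟩
  intro i KK hiK
  set q : ℝ := (Fintype.card Fq : ℝ) with hqdef
  have hq2 : (2 : ℝ) ≤ q := by
    have := Fintype.one_lt_card (α := Fq)
    rw [hqdef]; exact_mod_cast this
  have hq0 : (0 : ℝ) < q := lt_of_lt_of_le two_pos hq2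
  have hq1 : (1 : ℝ) ≤ q := le_trans one_le_two hq2
  have hqne : q ≠ 0 := ne_of_gt hq0
  have hr1 : 1 ≤ r := le_trans one_le_two hr
  set D : Polynomial Fq → Finset (Polynomial Fq) :=
    fun f => (MM Fq i).filter (fun d => d ^ r ∣ f) with hD
  set P : Finset (Polynomial Fq × Polynomial Fq) := (MM Fq i) ×ˢ (MM Fq i) with hP
  -- Step 1 : rewrite the finsum as a finset sum
  have h1 : (∑ᶠ f ∈ monicEQ Fq KK, ((cI Fq r i f : ℝ)) ^ 2)
      = ∑ f ∈ MM Fq KK, ((cI Fq r i f : ℝ)) ^ 2 := by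
    rw [← Set.Finite.coe_toFinset (finite_monicEQ Fq KK), finsum_mem_coe_finset]
    rfl
  rw [h1]
  -- Step 2 : pointwise bound on cI
  have h2 : ∀ f : Polynomial Fq, ((cI Fq r i f : ℝ)) ^ 2 ≤ (((D f).card : ℝ)) ^ 2 := by
    intro f
    have hset : {d : Polynomial Fq | d.Monic ∧ d.natDegree = i ∧ d ^ r ∣ f} = ↑(D f) := by
      ext d
      simp [hD, mem_MM, and_assoc]
    have hcI : cI Fq r i f = ∑ d ∈ D f, muF Fq d := by
      rw [cI, hset, finsum_mem_coe_finset]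
    have habs : |cI Fq r i f| ≤ ((D f).card : ℤ) := by
      rw [hcI]
      calc |∑ d ∈ D f, muF Fq d| ≤ ∑ d ∈ D f, |muF Fq d| := Finset.abs_sum_le_sum_abs _ _
        _ ≤ ∑ _d ∈ D f, 1 := Finset.sum_le_sum (fun d _ => muF_abs_le Fq d)
        _ = ((D f).card : ℤ) := by simp
    calc ((cI Fq r i f : ℝ)) ^ 2 = |(cI Fq r i f : ℝ)| ^ 2 := (sq_abs _).symm
      _ ≤ (((D f).card : ℝ)) ^ 2 := by
          apply pow_le_pow_left₀ (abs_nonneg _)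
          rw [← Int.cast_abs]
          exact_mod_cast habs
  -- Step 3 : open the square and swap summation
  have h3 : ∑ f ∈ MM Fq KK, (((D f).card : ℝ)) ^ 2
      = ∑ p ∈ P, ((((MM Fq KK).filter (fun f => p.1 ^ r ∣ f ∧ p.2 ^ r ∣ f)).card : ℝ)) := by
    have hexp : ∀ f : Polynomial Fq, (((D f).card : ℝ)) ^ 2
        = ∑ p ∈ P, (if p.1 ^ r ∣ f ∧ p.2 ^ r ∣ f then (1 : ℝ) else 0) := by
      intro f
      rw [hP, keyProd Fq (MM Fq i) (fun d => d ^ r ∣ f) 1, mul_one]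
    simp_rw [hexp]
    rw [Finset.sum_comm]
    refine Finset.sum_congr rfl fun p _ => ?_
    rw [Finset.sum_boole]
  -- Step 4 : per-pair counting bound
  have h4 : ∀ p ∈ P, ((((MM Fq KK).filter (fun f => p.1 ^ r ∣ f ∧ p.2 ^ r ∣ f)).card : ℝ))
      ≤ q ^ ((KK : ℤ) - 2 * r * i) * q ^ ((r : ℤ) * (gcd p.1 p.2).natDegree) := by
    rintro ⟨d1, d2⟩ hp
    rw [hP, Finset.mem_product, mem_MM, mem_MM] at hp
    obtain ⟨⟨hm1, hd1⟩, hm2, hd2⟩ := hp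
    have h1ne : d1 ≠ 0 := hm1.ne_zero
    have h2ne : d2 ≠ 0 := hm2.ne_zero
    set L := lcm (d1 ^ r) (d2 ^ r) with hL
    have hLne : L ≠ 0 := by
      rw [hL, Ne, lcm_eq_zero_iff]
      push_neg
      exact ⟨pow_ne_zero _ h1ne, pow_ne_zero _ h2ne⟩
    have hsub : (MM Fq KK).filter (fun f => d1 ^ r ∣ f ∧ d2 ^ r ∣ f)
        ⊆ (MM Fq KK).filter (fun f => L ∣ f) := by
      intro f hf
      simp only [Finset.mem_filter] at hf ⊢
      exact ⟨hf.1, lcm_dvd hf.2.1 hf.2.2⟩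
    have hstep : ((((MM Fq KK).filter (fun f => d1 ^ r ∣ f ∧ d2 ^ r ∣ f)).card : ℝ))
        ≤ q ^ ((KK : ℤ) - L.natDegree) :=
      le_trans (Nat.cast_le.mpr (Finset.card_le_card hsub)) (card_dvd_le_real Fq L hLne KK)
    have hGne : gcd (d1 ^ r) (d2 ^ r) ≠ 0 := fun hh =>
      (pow_ne_zero r h1ne) ((gcd_eq_zero_iff _ _).mp hh).1
    have hGL : (gcd (d1 ^ r) (d2 ^ r)).natDegree + L.natDegree = r * i + r * i := by
      have ha : Associated (gcd (d1 ^ r) (d2 ^ r) * L) (d1 ^ r * d2 ^ r) := gcd_mul_lcm _ _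
      have h0 : gcd (d1 ^ r) (d2 ^ r) * L ≠ 0 := mul_ne_zero hGne hLne
      have heq := natDegree_eq_of_associated' Fq h0 ha
      rw [Polynomial.natDegree_mul hGne hLne,
        Polynomial.natDegree_mul (pow_ne_zero _ h1ne) (pow_ne_zero _ h2ne),
        Polynomial.natDegree_pow, Polynomial.natDegree_pow, hd1, hd2] at heq
      exact heq
    have hGg : (gcd (d1 ^ r) (d2 ^ r)).natDegree ≤ r * (gcd d1 d2).natDegree :=
      natDegree_gcd_pow_le Fq r d1 d2 h1ne h2ne
    calc ((((MM Fq KK).filter (fun f => d1 ^ r ∣ f ∧ d2 ^ r ∣ f)).card : ℝ))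
        ≤ q ^ ((KK : ℤ) - L.natDegree) := hstep
      _ ≤ q ^ (((KK : ℤ) - 2 * r * i) + (r : ℤ) * (gcd d1 d2).natDegree) := by
          apply zpow_le_zpow_right₀ hq1
          have hGL' : ((gcd (d1 ^ r) (d2 ^ r)).natDegree : ℤ) + (L.natDegree : ℤ)
              = (r : ℤ) * i + (r : ℤ) * i := by exact_mod_cast hGL
          have hGg' : ((gcd (d1 ^ r) (d2 ^ r)).natDegree : ℤ)
              ≤ (r : ℤ) * ((gcd d1 d2).natDegree : ℤ) := by exact_mod_cast hGg
          linarith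
      _ = q ^ ((KK : ℤ) - 2 * r * i) * q ^ ((r : ℤ) * (gcd d1 d2).natDegree) :=
          zpow_add₀ hqne _ _
  -- Step 5 : bounding q^(r·deg gcd) by a sum over common divisors
  have h5 : ∀ d1 d2 : Polynomial Fq, d1 ∈ MM Fq i → d2 ∈ MM Fq i →
      q ^ ((r : ℤ) * (gcd d1 d2).natDegree)
        ≤ ∑ e ∈ Finset.range (i + 1), ∑ c ∈ MM Fq e,
            (if c ∣ d1 ∧ c ∣ d2 then q ^ ((r : ℤ) * e) else 0) := by
    intro d1 d2 hd1 hd2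
    rw [mem_MM] at hd1 hd2
    have h1ne : d1 ≠ 0 := hd1.1.ne_zero
    have hgne : gcd d1 d2 ≠ 0 := fun hh => h1ne ((gcd_eq_zero_iff _ _).mp hh).1
    set c0 := normalize (gcd d1 d2) with hc0
    have hc0m : c0.Monic := Polynomial.monic_normalize hgne
    have hcdeg : c0.natDegree = (gcd d1 d2).natDegree :=
      natDegree_eq_of_associated' Fq (hc0m.ne_zero) (normalize_associated _)
    have hdvd1 : c0 ∣ d1 := (normalize_dvd_iff).mpr (gcd_dvd_left d1 d2)
    have hdvd2 : c0 ∣ d2 := (normalize_dvd_iff).mpr (gcd_dvd_right d1 d2)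
    have he : c0.natDegree ≤ i := by
      have := Polynomial.natDegree_le_of_dvd hdvd1 h1ne
      omega
    have hnn : ∀ e ∈ Finset.range (i + 1),
        (0 : ℝ) ≤ ∑ c ∈ MM Fq e, (if c ∣ d1 ∧ c ∣ d2 then q ^ ((r : ℤ) * e) else 0) := by
      intro e _
      apply Finset.sum_nonneg
      intro c _
      split_ifs
      · exact zpow_nonneg hq0.le _
      · exact le_rfl
    calc q ^ ((r : ℤ) * (gcd d1 d2).natDegree)
        = (if c0 ∣ d1 ∧ c0 ∣ d2 then q ^ ((r : ℤ) * c0.natDegree) else 0) := by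
          rw [if_pos ⟨hdvd1, hdvd2⟩, hcdeg]
      _ ≤ ∑ c ∈ MM Fq c0.natDegree, (if c ∣ d1 ∧ c ∣ d2 then q ^ ((r : ℤ) * c0.natDegree) else 0) := by
          apply Finset.single_le_sum (f := fun c =>
            (if c ∣ d1 ∧ c ∣ d2 then q ^ ((r : ℤ) * c0.natDegree) else 0))
          · intro c _
            split_ifs
            · exact zpow_nonneg hq0.le _
            · exact le_rfl
          · rw [mem_MM]
            exact ⟨hc0m, rfl⟩
      _ ≤ ∑ e ∈ Finset.range (i + 1), ∑ c ∈ MM Fq e,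
            (if c ∣ d1 ∧ c ∣ d2 then q ^ ((r : ℤ) * e) else 0) := by
          apply Finset.single_le_sum (f := fun e => ∑ c ∈ MM Fq e,
            (if c ∣ d1 ∧ c ∣ d2 then q ^ ((r : ℤ) * e) else 0)) hnn
          rw [Finset.mem_range]
          omega
  -- geometric sum bound
  have hgeom : ∑ e ∈ Finset.range (i + 1), q ^ (((r : ℤ) - 1) * e)
      ≤ 2 * q ^ (((r : ℤ) - 1) * i) := by
    have hterm : ∀ e ∈ Finset.range (i + 1),
        q ^ (((r : ℤ) - 1) * e) ≤ q ^ (((r : ℤ) - 1) * i) * (1 / 2) ^ (i - e) := by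
      intro e he'
      have he : e ≤ i := Nat.lt_succ_iff.mp (Finset.mem_range.mp he')
      rw [div_pow, one_pow, one_div, ← div_eq_mul_inv, le_div_iff₀ (by positivity)]
      calc q ^ (((r : ℤ) - 1) * e) * 2 ^ (i - e)
          ≤ q ^ (((r : ℤ) - 1) * e) * q ^ (((r : ℤ) - 1) * ((i - e : ℕ) : ℤ)) := by
            apply mul_le_mul_of_nonneg_left ?_ (zpow_nonneg hq0.le _)
            calc (2 : ℝ) ^ (i - e) ≤ q ^ (i - e) := pow_le_pow_left₀ (by norm_num) hq2 _
              _ ≤ q ^ (((r : ℤ) - 1) * ((i - e : ℕ) : ℤ)) := by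
                  rw [← zpow_natCast q (i - e)]
                  apply zpow_le_zpow_right₀ hq1
                  have h2r : (2 : ℤ) ≤ (r : ℤ) := by exact_mod_cast hr
                  nlinarith [Int.natCast_nonneg (i - e)]
        _ = q ^ (((r : ℤ) - 1) * i) := by
            rw [← zpow_add₀ hqne]
            congr 1
            rw [Nat.cast_sub he]
            ring
    calc ∑ e ∈ Finset.range (i + 1), q ^ (((r : ℤ) - 1) * e)
        ≤ ∑ e ∈ Finset.range (i + 1), q ^ (((r : ℤ) - 1) * i) * (1 / 2) ^ (i - e) :=
          Finset.sum_le_sum hterm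
      _ = q ^ (((r : ℤ) - 1) * i) * ∑ e ∈ Finset.range (i + 1), ((1 / 2 : ℝ)) ^ (i - e) := by
          rw [Finset.mul_sum]
      _ ≤ q ^ (((r : ℤ) - 1) * i) * 2 := by
          apply mul_le_mul_of_nonneg_left ?_ (zpow_nonneg hq0.le _)
          have hrefl : ∑ e ∈ Finset.range (i + 1), ((1 / 2 : ℝ)) ^ (i - e)
              = ∑ e ∈ Finset.range (i + 1), ((1 / 2 : ℝ)) ^ e := by
            rw [← Finset.sum_range_reflect (fun j => ((1 / 2 : ℝ)) ^ j) (i + 1)]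
            refine Finset.sum_congr rfl fun e he => ?_
            congr 1 <;> omega
          rw [hrefl]
          exact sum_geometric_two_le _
      _ = 2 * q ^ (((r : ℤ) - 1) * i) := mul_comm _ _
  -- Assemble everything
  calc ∑ f ∈ MM Fq KK, ((cI Fq r i f : ℝ)) ^ 2
      ≤ ∑ f ∈ MM Fq KK, (((D f).card : ℝ)) ^ 2 := Finset.sum_le_sum fun f _ => h2 f
    _ = ∑ p ∈ P, ((((MM Fq KK).filter (fun f => p.1 ^ r ∣ f ∧ p.2 ^ r ∣ f)).card : ℝ)) := h3
    _ ≤ ∑ p ∈ P, q ^ ((KK : ℤ) - 2 * r * i) * q ^ ((r : ℤ) * (gcd p.1 p.2).natDegree) :=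
        Finset.sum_le_sum h4
    _ = q ^ ((KK : ℤ) - 2 * r * i) * ∑ p ∈ P, q ^ ((r : ℤ) * (gcd p.1 p.2).natDegree) := by
        rw [Finset.mul_sum]
    _ ≤ q ^ ((KK : ℤ) - 2 * r * i) * ∑ p ∈ P, ∑ e ∈ Finset.range (i + 1), ∑ c ∈ MM Fq e,
          (if c ∣ p.1 ∧ c ∣ p.2 then q ^ ((r : ℤ) * e) else 0) := by
        apply mul_le_mul_of_nonneg_left ?_ (zpow_nonneg hq0.le _)
        apply Finset.sum_le_sum
        rintro ⟨d1, d2⟩ hp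
        rw [hP, Finset.mem_product] at hp
        exact h5 d1 d2 hp.1 hp.2
    _ = q ^ ((KK : ℤ) - 2 * r * i) * ∑ e ∈ Finset.range (i + 1), ∑ c ∈ MM Fq e,
          ((((MM Fq i).filter (fun d => c ∣ d)).card : ℝ)) ^ 2 * q ^ ((r : ℤ) * e) := by
        congr 1
        rw [Finset.sum_comm]
        refine Finset.sum_congr rfl fun e _ => ?_
        rw [Finset.sum_comm]
        refine Finset.sum_congr rfl fun c _ => ?_
        exact keyProd Fq (MM Fq i) (fun d => c ∣ d) _
    _ ≤ q ^ ((KK : ℤ) - 2 * r * i) * ∑ e ∈ Finset.range (i + 1), ∑ c ∈ MM Fq e,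
          (q ^ ((i : ℤ) - e)) ^ 2 * q ^ ((r : ℤ) * e) := by
        apply mul_le_mul_of_nonneg_left ?_ (zpow_nonneg hq0.le _)
        apply Finset.sum_le_sum
        intro e _
        apply Finset.sum_le_sum
        intro c hc
        rw [mem_MM] at hc
        apply mul_le_mul_of_nonneg_right ?_ (zpow_nonneg hq0.le _)
        apply pow_le_pow_left₀ (Nat.cast_nonneg _)
        have := card_dvd_le_real Fq c hc.1.ne_zero i
        rwa [hc.2] at this
    _ ≤ q ^ ((KK : ℤ) - 2 * r * i) * ∑ e ∈ Finset.range (i + 1),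
          q ^ (e : ℤ) * ((q ^ ((i : ℤ) - e)) ^ 2 * q ^ ((r : ℤ) * e)) := by
        apply mul_le_mul_of_nonneg_left ?_ (zpow_nonneg hq0.le _)
        apply Finset.sum_le_sum
        intro e _
        rw [Finset.sum_const, nsmul_eq_mul]
        apply mul_le_mul_of_nonneg_right ?_
          (by positivity)
        calc ((MM Fq e).card : ℝ) ≤ ((Fintype.card Fq ^ e : ℕ) : ℝ) := by
              exact_mod_cast card_MM Fq e
          _ = q ^ (e : ℤ) := by rw [Nat.cast_pow, ← zpow_natCast]
    _ = q ^ ((KK : ℤ) - 2 * r * i) * ∑ e ∈ Finset.range (i + 1),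
          q ^ (2 * (i : ℤ)) * q ^ (((r : ℤ) - 1) * e) := by
        congr 1
        refine Finset.sum_congr rfl fun e he => ?_
        have he' : (e : ℤ) ≤ (i : ℤ) := by
          have := Nat.lt_succ_iff.mp (Finset.mem_range.mp he)
          exact_mod_cast this
        rw [sq, ← zpow_add₀ hqne, ← zpow_add₀ hqne, ← zpow_add₀ hqne, ← zpow_add₀ hqne]
        congr 1
        ring
    _ = q ^ ((KK : ℤ) - 2 * r * i) * (q ^ (2 * (i : ℤ)) *
          ∑ e ∈ Finset.range (i + 1), q ^ (((r : ℤ) - 1) * e)) := by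
        simp_rw [Finset.mul_sum]
    _ ≤ q ^ ((KK : ℤ) - 2 * r * i) * (q ^ (2 * (i : ℤ)) * (2 * q ^ (((r : ℤ) - 1) * i))) := by
        apply mul_le_mul_of_nonneg_left ?_ (zpow_nonneg hq0.le _)
        exact mul_le_mul_of_nonneg_left hgeom (zpow_nonneg hq0.le _)
    _ = 2 * q ^ ((KK : ℤ) + (1 - (r : ℤ)) * (i : ℤ)) := by
        rw [show ((KK : ℤ) + (1 - (r : ℤ)) * (i : ℤ))
            = ((KK : ℤ) - 2 * r * i) + (2 * (i : ℤ) + ((r : ℤ) - 1) * i) by ring,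
          zpow_add₀ hqne, zpow_add₀ hqne]
        ring

end RFreePaper
end
end

section
/- For every monic polynomial d with |d| ≤ q^D, where D = ⌊N/(r+1)⌋, one has 1/4 ≤ b_d ≤ 7/4, where b_d = Σ_{m ∈ M, |m| ≤ q^D/|d|, (m,d) = 1} μ(m)/|m|^r. -/
open MeasureTheory Polynomial

noncomputable section

namespace RFreePaper

variable (p h : ℕ) (Fq : Type) [Field Fq] [Fintype Fq] [DecidableEq Fq]

variable [CharP Fq p]

/-! ### Auxiliary development for statement 9 -/

section Statement9Aux

variable {Fq}

private lemma two_mul_le_two_pow (K : ℕ) : 2 * K ≤ 2 ^ K := by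
  induction K with
  | zero => norm_num
  | succ n ih =>
    rcases Nat.eq_zero_or_pos n with h | h
    · subst h; norm_num
    · have h2 : 2 ≤ 2 ^ n := Nat.one_lt_two_pow_iff.mpr (by omega)
      have : 2 ^ (n + 1) = 2 ^ n + 2 ^ n := by rw [pow_succ]; ring
      omega

private lemma finite_natDegreeLE (K : ℕ) :
    {m : Polynomial Fq | m.natDegree ≤ K}.Finite := by
  haveI : Finite (Polynomial.degreeLT Fq (K + 1)) :=
    Finite.of_equiv _ (Polynomial.degreeLTEquiv Fq (K + 1)).symm.toEquiv
  have h2 : ((Polynomial.degreeLT Fq (K + 1) : Submodule Fq (Polynomial Fq)) :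
      Set (Polynomial Fq)).Finite := Set.toFinite _
  refine h2.subset ?_
  intro m hm
  simp only [SetLike.mem_coe, Polynomial.mem_degreeLT]
  calc m.degree ≤ (m.natDegree : WithBot ℕ) := Polynomial.degree_le_natDegree
  _ < ((K + 1 : ℕ) : WithBot ℕ) := by exact_mod_cast Nat.lt_succ_of_le hm

private noncomputable def CC (d : Polynomial Fq) (K : ℕ) : Finset (Polynomial Fq) :=
  Set.Finite.toFinset (s := {m : Polynomial Fq | m.Monic ∧ m.natDegree ≤ K ∧ IsCoprime m d})
    ((finite_natDegreeLE K).subset (fun m hm => hm.2.1))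

private lemma mem_CC {d m : Polynomial Fq} {K : ℕ} :
    m ∈ CC d K ↔ m.Monic ∧ m.natDegree ≤ K ∧ IsCoprime m d := by
  simp [CC, Set.Finite.mem_toFinset]

private lemma coe_CC (d : Polynomial Fq) (K : ℕ) :
    (↑(CC d K) : Set (Polynomial Fq))
      = {m : Polynomial Fq | m.Monic ∧ m.natDegree ≤ K ∧ IsCoprime m d} :=
  Set.Finite.coe_toFinset _

private noncomputable def DD (m : Polynomial Fq) : Finset (Polynomial Fq) :=
  Set.Finite.toFinset
    (s := {e : Polynomial Fq | e.Monic ∧ e ∣ m ∧ e.natDegree ≤ m.natDegree})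
    ((finite_natDegreeLE m.natDegree).subset (fun e he => he.2.2))

private lemma mem_DD {m e : Polynomial Fq} (hm : m ≠ 0) :
    e ∈ DD m ↔ e.Monic ∧ e ∣ m := by
  simp only [DD, Set.Finite.mem_toFinset, Set.mem_setOf_eq]
  exact ⟨fun h => ⟨h.1, h.2.1⟩,
    fun h => ⟨h.1, h.2, Polynomial.natDegree_le_of_dvd h.2 hm⟩⟩

private lemma muF_one : muF Fq 1 = 1 := by
  simp only [muF]
  rw [if_pos squarefree_one]
  simp

private lemma muF_eq_zero {f : Polynomial Fq} (h : ¬ Squarefree f) : muF Fq f = 0 := by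
  simp only [muF]; rw [if_neg h]

private lemma abs_muF_le (f : Polynomial Fq) : |(muF Fq f : ℝ)| ≤ 1 := by
  simp only [muF]
  split
  · push_cast
    rw [abs_pow, abs_neg, abs_one, one_pow]
  · simp

private lemma squarefree_prime_mul {π v : Polynomial Fq} (hπ : Prime π)
    (hv : ¬ π ∣ v) (hsf : Squarefree v) : Squarefree (π * v) := by
  have hv0 : v ≠ 0 := hsf.ne_zero
  have hπ0 : π ≠ 0 := hπ.ne_zero
  rw [UniqueFactorizationMonoid.squarefree_iff_nodup_normalizedFactors
    (mul_ne_zero hπ0 hv0),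
    UniqueFactorizationMonoid.normalizedFactors_mul hπ0 hv0,
    UniqueFactorizationMonoid.normalizedFactors_irreducible hπ.irreducible,
    Multiset.singleton_add]
  refine Multiset.nodup_cons.mpr ⟨?_,
    (UniqueFactorizationMonoid.squarefree_iff_nodup_normalizedFactors hv0).mp hsf⟩
  intro hmem
  exact hv (((normalize_associated π).symm.dvd).trans
    (UniqueFactorizationMonoid.dvd_of_mem_normalizedFactors hmem))

private lemma muF_prime_mul {π v : Polynomial Fq} (hπ : Prime π) (hv : ¬ π ∣ v) :
    muF Fq (π * v) = - muF Fq v := by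
  by_cases hsf : Squarefree v
  · have hv0 : v ≠ 0 := hsf.ne_zero
    have hπ0 : π ≠ 0 := hπ.ne_zero
    have hsf2 : Squarefree (π * v) := squarefree_prime_mul hπ hv hsf
    simp only [muF]
    rw [if_pos hsf2, if_pos hsf,
      UniqueFactorizationMonoid.normalizedFactors_mul hπ0 hv0,
      UniqueFactorizationMonoid.normalizedFactors_irreducible hπ.irreducible]
    simp [pow_add]
  · have h2 : ¬ Squarefree (π * v) := fun h => hsf (h.squarefree_of_dvd (dvd_mul_left v π))
    rw [muF_eq_zero h2, muF_eq_zero hsf, neg_zero]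

open Classical in
private lemma sum_muF_divisors {m : Polynomial Fq} (hm : m.Monic) :
    ∑ e ∈ DD m, (muF Fq e : ℝ) = if m = 1 then 1 else 0 := by
  have hm0 : m ≠ 0 := hm.ne_zero
  by_cases h1 : m = 1
  · subst h1
    have hDD : DD (1 : Polynomial Fq) = {1} := by
      ext e
      rw [mem_DD one_ne_zero, Finset.mem_singleton]
      constructor
      · rintro ⟨hmon, hdvd⟩
        exact hmon.eq_one_of_isUnit (isUnit_of_dvd_one hdvd)
      · rintro rfl; exact ⟨monic_one, dvd_rfl⟩
    rw [hDD, if_pos rfl, Finset.sum_singleton, muF_one]; norm_num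
  · rw [if_neg h1]
    have hnu : ¬ IsUnit m := by
      rw [Polynomial.Monic.isUnit_iff hm]; exact h1
    obtain ⟨i, hi, hidvd⟩ := WfDvdMonoid.exists_irreducible_factor hnu hm0
    set π := normalize i with hπdef
    have hi0 : i ≠ 0 := hi.ne_zero
    have hπirr : Irreducible π := (normalize_associated i).symm.irreducible hi
    have hπprime : Prime π := hπirr.prime
    have hπmon : π.Monic := Polynomial.monic_normalize hi0
    have hπ0 : π ≠ 0 := hπprime.ne_zero
    have hπm : π ∣ m := ((normalize_associated i).dvd).trans hidvd
    obtain ⟨m₁, hm₁⟩ := hπm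
    set A := (DD m).filter (fun e => Squarefree e ∧ ¬ π ∣ e) with hA
    have hstep1 : ∑ e ∈ DD m, (muF Fq e : ℝ)
        = ∑ e ∈ (DD m).filter (fun e => Squarefree e), (muF Fq e : ℝ) := by
      refine (Finset.sum_filter_of_ne ?_).symm
      intro e _ hne
      by_contra hsf
      rw [muF_eq_zero hsf] at hne
      simp at hne
    have hset : (DD m).filter (fun e => Squarefree e)
        = A ∪ A.image (fun v => π * v) := by
      ext e
      simp only [Finset.mem_union, Finset.mem_filter, Finset.mem_image, hA]
      constructor
      · rintro ⟨heD, hesf⟩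
        by_cases hπe : π ∣ e
        · right
          obtain ⟨v, rfl⟩ := hπe
          have hemon := ((mem_DD hm0).mp heD).1
          have hvmon : v.Monic := hπmon.of_mul_monic_left hemon
          have hπv : ¬ π ∣ v := by
            rintro ⟨w, rfl⟩
            exact hπprime.not_unit (hesf π ⟨w, by ring⟩)
          refine ⟨v, ⟨(mem_DD hm0).mpr ⟨hvmon,
            (dvd_mul_left v π).trans ((mem_DD hm0).mp heD).2⟩,
            hesf.squarefree_of_dvd (dvd_mul_left v π), hπv⟩, rfl⟩
        · exact Or.inl ⟨heD, hesf, hπe⟩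
      · rintro (h | h)
        · exact ⟨h.1, h.2.1⟩
        · obtain ⟨v, ⟨hvD, hvsf, hπv⟩, rfl⟩ := h
          have hvmon := ((mem_DD hm0).mp hvD).1
          have hvdvd := ((mem_DD hm0).mp hvD).2
          have hcop : IsCoprime v π := (hπprime.coprime_iff_not_dvd.mpr hπv).symm
          have hvm₁ : v ∣ m₁ := by
            refine hcop.dvd_of_dvd_mul_left ?_
            rw [← hm₁]; exact hvdvd
          refine ⟨(mem_DD hm0).mpr ⟨hπmon.mul hvmon, ?_⟩,
            squarefree_prime_mul hπprime hπv hvsf⟩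
          rw [hm₁]; exact mul_dvd_mul_left π hvm₁
    have hdisj : Disjoint A (A.image (fun v => π * v)) := by
      rw [Finset.disjoint_left]
      rintro e heA heI
      rw [hA, Finset.mem_filter] at heA
      rw [Finset.mem_image] at heI
      obtain ⟨v, _, rfl⟩ := heI
      exact heA.2.2 (dvd_mul_right π v)
    rw [hstep1, hset, Finset.sum_union hdisj,
      Finset.sum_image (fun x _ y _ h => mul_left_cancel₀ hπ0 h),
      ← Finset.sum_add_distrib]
    refine Finset.sum_eq_zero ?_
    intro v hv
    rw [hA, Finset.mem_filter] at hv
    rw [muF_prime_mul hπprime hv.2.2]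
    push_cast
    ring

private noncomputable def wfn (r : ℕ) (f : Polynomial Fq) : ℝ :=
  ((Fintype.card Fq : ℝ) ^ (r * f.natDegree))⁻¹

private lemma w_one (r : ℕ) : wfn r (1 : Polynomial Fq) = 1 := by
  simp [wfn]

private lemma w_nonneg (r : ℕ) (f : Polynomial Fq) : 0 ≤ wfn r f := by
  unfold wfn; positivity

private lemma card_monic_fiber {T : Finset (Polynomial Fq)} {n : ℕ}
    (hT : ∀ f ∈ T, f.Monic ∧ f.natDegree = n) : T.card ≤ Fintype.card Fq ^ n := by
  classical
  have hinj : Set.InjOn (fun (m : Polynomial Fq) (i : Fin n) => m.coeff i) T := by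
    intro a ha b hb hab
    have ha' := hT a (by simpa using ha)
    have hb' := hT b (by simpa using hb)
    apply Polynomial.ext
    intro i
    rcases lt_trichotomy i n with h | h | h
    · exact congrFun hab ⟨i, h⟩
    · have hai : a.natDegree = i := by rw [ha'.2, h]
      have hbi : b.natDegree = i := by rw [hb'.2, h]
      have h1 : a.coeff i = 1 := by rw [← hai]; exact ha'.1.coeff_natDegree
      have h2 : b.coeff i = 1 := by rw [← hbi]; exact hb'.1.coeff_natDegree
      rw [h1, h2]
    · rw [Polynomial.coeff_eq_zero_of_natDegree_lt (by rw [ha'.2]; exact h),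
        Polynomial.coeff_eq_zero_of_natDegree_lt (by rw [hb'.2]; exact h)]
  calc T.card ≤ (Finset.univ : Finset (Fin n → Fq)).card :=
        Finset.card_le_card_of_injOn _ (fun a _ => Finset.mem_univ _) hinj
  _ = Fintype.card Fq ^ n := by
      rw [Finset.card_univ, Fintype.card_fun, Fintype.card_fin]

private lemma fiber_bound (r : ℕ) (hr : 2 ≤ r) {k : ℕ} {T : Finset (Polynomial Fq)}
    (hT : ∀ f ∈ T, f.Monic ∧ f.natDegree = k) :
    ∑ f ∈ T, wfn r f ≤ ((2 : ℝ)⁻¹) ^ k := by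
  unfold wfn
  set q := Fintype.card Fq with hq
  have hq2 : 2 ≤ q := Fintype.one_lt_card
  have hq0 : (0 : ℝ) < (q : ℝ) := by positivity
  have hsum : ∑ f ∈ T, ((q : ℝ) ^ (r * f.natDegree))⁻¹
      = T.card * ((q : ℝ) ^ (r * k))⁻¹ := by
    rw [Finset.sum_congr rfl (fun f hf => by rw [(hT f hf).2]), Finset.sum_const,
      nsmul_eq_mul]
  rw [hsum]
  have hcard : (T.card : ℝ) ≤ (q : ℝ) ^ k := by
    have := card_monic_fiber hT
    calc (T.card : ℝ) ≤ ((q ^ k : ℕ) : ℝ) := by exact_mod_cast this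
    _ = (q : ℝ) ^ k := by push_cast; ring
  have hkey : (q : ℝ) ^ k * (2 : ℝ) ^ k ≤ (q : ℝ) ^ (r * k) := by
    have h1 : r * k = k + (r - 1) * k := by
      have : 1 ≤ r := by omega
      cases' Nat.exists_eq_add_of_le this with s hs
      subst hs; rw [Nat.add_sub_cancel_left]; ring
    rw [h1, pow_add]
    refine mul_le_mul_of_nonneg_left ?_ (by positivity)
    calc (2 : ℝ) ^ k ≤ (2 : ℝ) ^ ((r - 1) * k) := by
          refine pow_le_pow_right₀ (by norm_num) ?_
          exact Nat.le_mul_of_pos_left k (by omega)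
    _ ≤ (q : ℝ) ^ ((r - 1) * k) := by
          refine pow_le_pow_left₀ (by norm_num) ?_ _
          exact_mod_cast hq2
  have hpos : (0 : ℝ) < (q : ℝ) ^ (r * k) := by positivity
  rw [inv_pow]
  calc (T.card : ℝ) * ((q : ℝ) ^ (r * k))⁻¹ ≤ (q : ℝ) ^ k * ((q : ℝ) ^ (r * k))⁻¹ :=
        mul_le_mul_of_nonneg_right hcard (by positivity)
  _ ≤ ((2 : ℝ) ^ k)⁻¹ := by
        rw [← div_eq_mul_inv, inv_eq_one_div,
          div_le_div_iff₀ hpos (by positivity : (0:ℝ) < (2:ℝ)^k)]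
        nlinarith [hkey]

private lemma geom_le_two (m : ℕ) : ∑ i ∈ Finset.range m, ((2 : ℝ)⁻¹) ^ i ≤ 2 := by
  rw [geom_sum_eq (by norm_num)]
  have h1 : (0 : ℝ) ≤ ((2 : ℝ)⁻¹) ^ m := by positivity
  rw [div_le_iff_of_neg (by norm_num : ((2:ℝ)⁻¹ - 1) < 0)]
  linarith

private lemma sum_w_le (r : ℕ) (hr : 2 ≤ r) (S : Finset (Polynomial Fq)) (a b : ℕ)
    (hS : ∀ f ∈ S, f.Monic ∧ a ≤ f.natDegree ∧ f.natDegree ≤ b) :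
    ∑ f ∈ S, wfn r f ≤ 2 * ((2 : ℝ)⁻¹) ^ a := by
  classical
  have hmap : ∀ f ∈ S, f.natDegree ∈ Finset.Icc a b :=
    fun f hf => Finset.mem_Icc.mpr ⟨(hS f hf).2.1, (hS f hf).2.2⟩
  rw [← Finset.sum_fiberwise_of_maps_to hmap]
  calc ∑ k ∈ Finset.Icc a b, ∑ f ∈ S.filter (fun f => f.natDegree = k), wfn r f
      ≤ ∑ k ∈ Finset.Icc a b, ((2 : ℝ)⁻¹) ^ k := by
        refine Finset.sum_le_sum (fun k _ => fiber_bound r hr ?_)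
        intro f hf
        rw [Finset.mem_filter] at hf
        exact ⟨(hS f hf.1).1, hf.2⟩
  _ ≤ 2 * ((2 : ℝ)⁻¹) ^ a := by
        rw [← Finset.Ico_add_one_right_eq_Icc, Finset.sum_Ico_eq_sum_range]
        have : ∀ i ∈ Finset.range (b + 1 - a), ((2:ℝ)⁻¹) ^ (a + i)
            = ((2:ℝ)⁻¹) ^ a * ((2:ℝ)⁻¹) ^ i := fun i _ => pow_add _ _ _
        rw [Finset.sum_congr rfl this, ← Finset.mul_sum]
        rw [mul_comm (2 : ℝ)]
        exact mul_le_mul_of_nonneg_left (geom_le_two _) (by positivity)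

private noncomputable def VV (r : ℕ) (d : Polynomial Fq) (j : ℕ) : ℝ :=
  ∑ f ∈ CC d j, wfn r f

private lemma bd_key (r : ℕ) (hr : 2 ≤ r) (d : Polynomial Fq) (K : ℕ) :
    1 / 4 ≤ (∑ e ∈ CC d K, (muF Fq e : ℝ) * wfn r e) ∧
      (∑ e ∈ CC d K, (muF Fq e : ℝ) * wfn r e) ≤ 7 / 4 := by
  classical
  have hone_mem : ∀ j : ℕ, (1 : Polynomial Fq) ∈ CC d j := fun j =>
    mem_CC.mpr ⟨monic_one, by simp, isCoprime_one_left⟩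
  have hV1 : ∀ j, 1 ≤ VV r d j := by
    intro j
    unfold VV
    have h := Finset.single_le_sum (f := fun f => wfn r f)
      (fun f _ => w_nonneg r f) (hone_mem j)
    simpa [w_one] using h
  have hV2 : ∀ j, VV r d j ≤ 2 := by
    intro j
    unfold VV
    have h := sum_w_le r hr (CC d j) 0 j (fun f hf => by
      have h := mem_CC.mp hf
      exact ⟨h.1, Nat.zero_le _, h.2.1⟩)
    simpa using h
  have hVmono : ∀ j j', j ≤ j' → VV r d j ≤ VV r d j' := by
    intro j j' hj
    unfold VV
    refine Finset.sum_le_sum_of_subset_of_nonneg ?_ (fun f _ _ => w_nonneg r f)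
    intro f hf
    have h := mem_CC.mp hf
    exact mem_CC.mpr ⟨h.1, h.2.1.trans hj, h.2.2⟩
  have hVdiff : ∀ j, j ≤ K → VV r d K - VV r d j ≤ 2 * ((2 : ℝ)⁻¹) ^ (j + 1) := by
    intro j hj
    have hsub : CC d j ⊆ CC d K := by
      intro f hf
      have h := mem_CC.mp hf
      exact mem_CC.mpr ⟨h.1, h.2.1.trans hj, h.2.2⟩
    have hsd := Finset.sum_sdiff (f := fun f => wfn r f) hsub
    have heq : VV r d K - VV r d j = ∑ f ∈ CC d K \ CC d j, wfn r f := by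
      unfold VV; linarith [hsd]
    rw [heq]
    refine sum_w_le r hr _ (j + 1) K ?_
    intro f hf
    rw [Finset.mem_sdiff] at hf
    have h := mem_CC.mp hf.1
    refine ⟨h.1, ?_, h.2.1⟩
    by_contra hlt
    exact hf.2 (mem_CC.mpr ⟨h.1, by omega, h.2.2⟩)
  have hiden : ∑ m ∈ CC d K, wfn r m * (∑ e ∈ DD m, (muF Fq e : ℝ))
      = ∑ e ∈ CC d K, ((muF Fq e : ℝ) * wfn r e) * VV r d (K - e.natDegree) := by
    unfold VV
    simp_rw [Finset.mul_sum]
    rw [Finset.sum_sigma', Finset.sum_sigma']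
    refine Finset.sum_nbij' (fun a => ⟨a.2, a.1 /ₘ a.2⟩) (fun b => ⟨b.1 * b.2, b.1⟩)
      ?_ ?_ ?_ ?_ ?_
    · rintro ⟨m, e⟩ hme
      simp only [Finset.mem_sigma] at hme
      obtain ⟨hmC, heD⟩ := hme
      have hm := mem_CC.mp hmC
      have hm0 : m ≠ 0 := hm.1.ne_zero
      have he := (mem_DD hm0).mp heD
      have hdvd := he.2
      have hmod : m %ₘ e = 0 := (Polynomial.modByMonic_eq_zero_iff_dvd he.1).mpr hdvd
      have hef : e * (m /ₘ e) = m := by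
        have h := Polynomial.modByMonic_add_div m e
        rw [hmod, zero_add] at h
        exact h
      have hfmon : (m /ₘ e).Monic := he.1.of_mul_monic_left (by rw [hef]; exact hm.1)
      have hdeg : e.natDegree + (m /ₘ e).natDegree = m.natDegree := by
        conv_rhs => rw [← hef]
        rw [he.1.natDegree_mul hfmon]
      simp only [Finset.mem_sigma]
      constructor
      · refine mem_CC.mpr ⟨he.1, ?_, hm.2.2.of_isCoprime_of_dvd_left hdvd⟩
        have := hm.2.1
        omega
      · refine mem_CC.mpr ⟨hfmon, ?_,
          hm.2.2.of_isCoprime_of_dvd_left (dvd_of_mul_left_eq e hef)⟩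
        have := hm.2.1
        omega
    · rintro ⟨e, f⟩ hef
      simp only [Finset.mem_sigma] at hef
      obtain ⟨heC, hfC⟩ := hef
      have he := mem_CC.mp heC
      have hf := mem_CC.mp hfC
      simp only [Finset.mem_sigma]
      constructor
      · refine mem_CC.mpr ⟨he.1.mul hf.1, ?_, (he.2.2).mul_left hf.2.2⟩
        rw [he.1.natDegree_mul hf.1]
        have h1 := he.2.1
        have h2 := hf.2.1
        omega
      · exact (mem_DD (he.1.mul hf.1).ne_zero).mpr ⟨he.1, dvd_mul_right e f⟩
    · rintro ⟨m, e⟩ hme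
      simp only [Finset.mem_sigma] at hme
      obtain ⟨hmC, heD⟩ := hme
      have hm := mem_CC.mp hmC
      have hm0 : m ≠ 0 := hm.1.ne_zero
      have he := (mem_DD hm0).mp heD
      have hmod : m %ₘ e = 0 := (Polynomial.modByMonic_eq_zero_iff_dvd he.1).mpr he.2
      have hef : e * (m /ₘ e) = m := by
        have h := Polynomial.modByMonic_add_div m e
        rw [hmod, zero_add] at h
        exact h
      dsimp only
      rw [hef]
    · rintro ⟨e, f⟩ hef
      simp only [Finset.mem_sigma] at hef
      have he := mem_CC.mp hef.1
      have hcan : (e * f) /ₘ e = f := by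
        have hdvd : e ∣ e * f := dvd_mul_right e f
        have hmod : (e * f) %ₘ e = 0 :=
          (Polynomial.modByMonic_eq_zero_iff_dvd he.1).mpr hdvd
        have h := Polynomial.modByMonic_add_div (e * f) e
        rw [hmod, zero_add] at h
        exact mul_left_cancel₀ he.1.ne_zero h
      dsimp only
      rw [hcan]
    · rintro ⟨m, e⟩ hme
      simp only [Finset.mem_sigma] at hme
      obtain ⟨hmC, heD⟩ := hme
      have hm := mem_CC.mp hmC
      have hm0 : m ≠ 0 := hm.1.ne_zero
      have he := (mem_DD hm0).mp heD
      have hmod : m %ₘ e = 0 := (Polynomial.modByMonic_eq_zero_iff_dvd he.1).mpr he.2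
      have hef : e * (m /ₘ e) = m := by
        have h := Polynomial.modByMonic_add_div m e
        rw [hmod, zero_add] at h
        exact h
      have hfmon : (m /ₘ e).Monic := he.1.of_mul_monic_left (by rw [hef]; exact hm.1)
      have hdeg : e.natDegree + (m /ₘ e).natDegree = m.natDegree := by
        conv_rhs => rw [← hef]
        rw [he.1.natDegree_mul hfmon]
      have hwsplit : wfn r m = wfn r e * wfn r (m /ₘ e) := by
        unfold wfn
        rw [← hdeg, Nat.mul_add, pow_add, mul_inv]
      simp only
      rw [hwsplit]
      ring
  have hleft : ∑ m ∈ CC d K, wfn r m * (∑ e ∈ DD m, (muF Fq e : ℝ)) = 1 := by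
    rw [Finset.sum_congr rfl (fun m hm => by
      rw [sum_muF_divisors (mem_CC.mp hm).1])]
    rw [Finset.sum_eq_single_of_mem 1 (hone_mem K)]
    · rw [if_pos rfl, w_one, mul_one]
    · intro b _ hb
      rw [if_neg hb, mul_zero]
  have hBV : (∑ e ∈ CC d K, (muF Fq e : ℝ) * wfn r e) * VV r d K
      = 1 + ∑ e ∈ CC d K, ((muF Fq e : ℝ) * wfn r e)
          * (VV r d K - VV r d (K - e.natDegree)) := by
    rw [Finset.sum_mul, ← hleft, hiden, ← Finset.sum_add_distrib]
    refine Finset.sum_congr rfl (fun e he => by ring)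
  have hEbound : |∑ e ∈ CC d K, ((muF Fq e : ℝ) * wfn r e)
      * (VV r d K - VV r d (K - e.natDegree))| ≤ 1 / 2 := by
    have h1 : |∑ e ∈ CC d K, ((muF Fq e : ℝ) * wfn r e)
        * (VV r d K - VV r d (K - e.natDegree))|
        ≤ ∑ e ∈ CC d K, wfn r e * (VV r d K - VV r d (K - e.natDegree)) := by
      refine (Finset.abs_sum_le_sum_abs _ _).trans (Finset.sum_le_sum ?_)
      intro e he
      have hnn : 0 ≤ VV r d K - VV r d (K - e.natDegree) :=
        sub_nonneg.mpr (hVmono _ _ (Nat.sub_le _ _))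
      rw [abs_mul, abs_of_nonneg hnn]
      refine mul_le_mul_of_nonneg_right ?_ hnn
      rw [abs_mul, abs_of_nonneg (w_nonneg r e)]
      calc |(muF Fq e : ℝ)| * wfn r e ≤ 1 * wfn r e :=
            mul_le_mul_of_nonneg_right (abs_muF_le e) (w_nonneg r e)
      _ = wfn r e := one_mul _
    have h2 : ∑ e ∈ CC d K, wfn r e * (VV r d K - VV r d (K - e.natDegree))
        = ∑ e ∈ (CC d K).erase 1, wfn r e * (VV r d K - VV r d (K - e.natDegree)) := by
      rw [eq_comm]
      refine Finset.sum_erase _ ?_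
      simp
    have h3 : ∑ e ∈ (CC d K).erase 1, wfn r e * (VV r d K - VV r d (K - e.natDegree))
        ≤ ∑ e ∈ (CC d K).erase 1,
            wfn r e * (2 * ((2:ℝ)⁻¹) ^ (K - e.natDegree + 1)) := by
      refine Finset.sum_le_sum (fun e he => ?_)
      exact mul_le_mul_of_nonneg_left (hVdiff _ (Nat.sub_le _ _)) (w_nonneg r e)
    have h4 : ∑ e ∈ (CC d K).erase 1, wfn r e * (2 * ((2:ℝ)⁻¹) ^ (K - e.natDegree + 1))
        ≤ K * (2 * ((2:ℝ)⁻¹) ^ (K + 1)) := by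
      have hmapsto : ∀ e ∈ (CC d K).erase 1, e.natDegree ∈ Finset.Icc 1 K := by
        intro e he
        rw [Finset.mem_erase] at he
        have h := mem_CC.mp he.2
        have hd0 : e.natDegree ≠ 0 := by
          intro h0
          exact he.1 (h.1.natDegree_eq_zero.mp h0)
        rw [Finset.mem_Icc]
        have := h.2.1
        omega
      rw [← Finset.sum_fiberwise_of_maps_to hmapsto]
      have hfib : ∀ k ∈ Finset.Icc 1 K,
          ∑ e ∈ ((CC d K).erase 1).filter (fun e => e.natDegree = k),
            wfn r e * (2 * ((2:ℝ)⁻¹) ^ (K - e.natDegree + 1))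
          ≤ 2 * ((2:ℝ)⁻¹) ^ (K + 1) := by
        intro k hk
        rw [Finset.mem_Icc] at hk
        have heq : ∀ e ∈ ((CC d K).erase 1).filter (fun e => e.natDegree = k),
            wfn r e * (2 * ((2:ℝ)⁻¹) ^ (K - e.natDegree + 1))
            = wfn r e * (2 * ((2:ℝ)⁻¹) ^ (K - k + 1)) := by
          intro e he
          rw [Finset.mem_filter] at he
          rw [he.2]
        rw [Finset.sum_congr rfl heq, ← Finset.sum_mul]
        have hfb := fiber_bound r hr (k := k)
          (T := ((CC d K).erase 1).filter (fun e => e.natDegree = k)) (by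
            intro f hf
            rw [Finset.mem_filter, Finset.mem_erase] at hf
            exact ⟨(mem_CC.mp hf.1.2).1, hf.2⟩)
        calc (∑ e ∈ ((CC d K).erase 1).filter (fun e => e.natDegree = k), wfn r e)
              * (2 * ((2:ℝ)⁻¹) ^ (K - k + 1))
            ≤ ((2:ℝ)⁻¹) ^ k * (2 * ((2:ℝ)⁻¹) ^ (K - k + 1)) :=
              mul_le_mul_of_nonneg_right hfb (by positivity)
        _ = 2 * (((2:ℝ)⁻¹) ^ (k + (K - k + 1))) := by rw [pow_add]; ring
        _ = 2 * ((2:ℝ)⁻¹) ^ (K + 1) := by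
              congr 2
              omega
      calc ∑ k ∈ Finset.Icc 1 K,
            ∑ e ∈ ((CC d K).erase 1).filter (fun e => e.natDegree = k),
              wfn r e * (2 * ((2:ℝ)⁻¹) ^ (K - e.natDegree + 1))
          ≤ ∑ k ∈ Finset.Icc 1 K, 2 * ((2:ℝ)⁻¹) ^ (K + 1) := Finset.sum_le_sum hfib
      _ = K * (2 * ((2:ℝ)⁻¹) ^ (K + 1)) := by
          rw [Finset.sum_const, Nat.card_Icc, nsmul_eq_mul]
          norm_num
    have h5 : (K : ℝ) * (2 * ((2:ℝ)⁻¹) ^ (K + 1)) ≤ 1 / 2 := by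
      have hn : (2 * K : ℕ) ≤ 2 ^ K := two_mul_le_two_pow K
      have hn' : (2 * (K : ℝ)) ≤ 2 ^ K := by exact_mod_cast hn
      have hp : (0:ℝ) < 2 ^ K := by positivity
      calc (K : ℝ) * (2 * ((2:ℝ)⁻¹) ^ (K + 1))
          = (2 * K) * ((2:ℝ) ^ (K + 1))⁻¹ := by rw [inv_pow]; ring
      _ ≤ 2 ^ K * ((2:ℝ) ^ (K + 1))⁻¹ := mul_le_mul_of_nonneg_right hn' (by positivity)
      _ = 1 / 2 := by
          rw [pow_succ, mul_inv, ← mul_assoc, mul_inv_cancel₀ hp.ne', one_mul]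
          norm_num
    calc |∑ e ∈ CC d K, ((muF Fq e : ℝ) * wfn r e)
        * (VV r d K - VV r d (K - e.natDegree))|
        ≤ ∑ e ∈ CC d K, wfn r e * (VV r d K - VV r d (K - e.natDegree)) := h1
    _ = ∑ e ∈ (CC d K).erase 1, wfn r e * (VV r d K - VV r d (K - e.natDegree)) := h2
    _ ≤ ∑ e ∈ (CC d K).erase 1, wfn r e * (2 * ((2:ℝ)⁻¹) ^ (K - e.natDegree + 1)) := h3
    _ ≤ K * (2 * ((2:ℝ)⁻¹) ^ (K + 1)) := h4
    _ ≤ 1 / 2 := h5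
  set B : ℝ := ∑ e ∈ CC d K, (muF Fq e : ℝ) * wfn r e with hBdef
  set E : ℝ := ∑ e ∈ CC d K, ((muF Fq e : ℝ) * wfn r e)
      * (VV r d K - VV r d (K - e.natDegree)) with hEdef
  have hVpos : 0 < VV r d K := lt_of_lt_of_le one_pos (hV1 K)
  have hE := abs_le.mp hEbound
  have hBV1 : 1 / 2 ≤ B * VV r d K := by rw [hBV]; linarith [hE.1]
  have hBV2 : B * VV r d K ≤ 3 / 2 := by rw [hBV]; linarith [hE.2]
  have hlow : 1 / 4 ≤ B := by
    have h : 1 / 4 * VV r d K ≤ B * VV r d K := by nlinarith [hV2 K, hV1 K]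
    exact le_of_mul_le_mul_right h hVpos
  refine ⟨hlow, ?_⟩
  calc B = B * 1 := (mul_one B).symm
  _ ≤ B * VV r d K := by nlinarith [hV1 K]
  _ ≤ 3 / 2 := hBV2
  _ ≤ 7 / 4 := by norm_num

end Statement9Aux

theorem statement9
    [Fact p.Prime] (hcard : Fintype.card Fq = p ^ h) (r : ℕ) (hr : 2 ≤ r) :
    ∀ N : ℕ, 1 ≤ N → ∀ d : Polynomial Fq, d.Monic → d.natDegree ≤ N / (r + 1) →
      1 / 4 ≤ bd Fq r N d ∧ bd Fq r N d ≤ 7 / 4 := by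
  intro N _ d _ _
  have hbd : bd Fq r N d
      = ∑ e ∈ CC d (N / (r + 1) - d.natDegree), (muF Fq e : ℝ) * wfn r e := by
    rw [bd, ← coe_CC d (N / (r + 1) - d.natDegree), finsum_mem_coe_finset]
    refine Finset.sum_congr rfl (fun e _ => ?_)
    rw [div_eq_mul_inv]
    rfl
  rw [hbd]
  exact bd_key r hr d _

end RFreePaper
end
end
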